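/- Let Γ be a finite simple graph and I a subset of vertices such that contracting I to a single vertex V_I yields graph Γ_I. Suppose O^1 and O^2 are acyclic orientations of Γ agreeing with a fixed acyclic orientation on I (with linear extension v_1 ⋯ v_k of the induced order on I), inducing acyclic orientations O^1_{Γ_I}, O^2_{Γ_I} of Γ_I. If c_I is a click-sequence from O^1_{Γ_I} to O^2_{Γ_I}, then the sequence obtained by replacing each occurrence of V_I in c_I by the block v_1 v_2 ⋯ v_k is a click-sequence from O^1 to O^2. -/

import Mathlib

variable {V : Type*}

/-- An acyclic orientation of a simple graph `G`. -/
structure AcyclicOrientation (G : SimpleGraph V) where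
  dir : V → V → Prop
  dir_adj : ∀ {a b : V}, dir a b → G.Adj a b
  total : ∀ {a b : V}, G.Adj a b → dir a b ∨ dir b a
  acyclic : ∀ a : V, ¬ Relation.TransGen dir a a

namespace AcyclicOrientation

variable {G : SimpleGraph V}

/-- `v` is a source: no edge points into `v`. -/
def IsSource (O : AcyclicOrientation G) (v : V) : Prop := ∀ a, ¬ O.dir a v

/-- `O'` is obtained from `O` by converting the source `v` into a sink. -/
def ClickAt (O : AcyclicOrientation G) (v : V) (O' : AcyclicOrientation G) : Prop :=
  O.IsSource v ∧ ∀ a b, (O'.dir a b ↔ (((a = v ∨ b = v) ∧ O.dir b a) ∨ (a ≠ v ∧ b ≠ v ∧ O.dir a b)))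

/-- One source-to-sink conversion relates `O` and `O'`. -/
def IsClick (O O' : AcyclicOrientation G) : Prop := ∃ v, O.ClickAt v O'

/-- Click-equivalence: reachability by a finite sequence of clicks. -/
def ClickEquiv (O O' : AcyclicOrientation G) : Prop :=
  Relation.ReflTransGen IsClick O O'

/-- `ClickSeq O c O'` : the list `c` is a click-sequence applicable to `O` with result `O'`. -/
inductive ClickSeq : AcyclicOrientation G → List V → AcyclicOrientation G → Prop
  | nil (O : AcyclicOrientation G) : ClickSeq O [] O
  | cons {O O' O'' : AcyclicOrientation G} {v : V} {c : List V} :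
      O.ClickAt v O' → ClickSeq O' c O'' → ClickSeq O (v :: c) O''

open scoped Classical in
/-- `ν_P(O)`: forward minus backward edges of the closed walk `p` under `O`. -/
noncomputable def nu (O : AcyclicOrientation G) {u : V} (p : G.Walk u u) : ℤ :=
  (p.darts.map (fun d => if O.dir d.toProd.1 d.toProd.2 then (1 : ℤ) else -1)).sum

/-- The `vw`-interval: vertices on a directed path from `v` to `w`. -/
def interval (O : AcyclicOrientation G) (v w : V) : Set V :=
  {a | Relation.ReflTransGen O.dir v a ∧ Relation.ReflTransGen O.dir a w}

end AcyclicOrientation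

open AcyclicOrientation

/-- The setoid of click-equivalence (equivalence relation generated by clicks). -/
def clickSetoid (G : SimpleGraph V) : Setoid (AcyclicOrientation G) :=
  ⟨Relation.EqvGen IsClick, Relation.EqvGen.is_equivalence _⟩

/-- `κ(G)`: the number of click-equivalence classes of acyclic orientations. -/
noncomputable def kappa (G : SimpleGraph V) : ℕ :=
  Nat.card (Quotient (clickSetoid G))

/-- The graph obtained from `G` by contracting the vertex set `I` to the single vertex `vI ∈ I`
(vertices of `I` other than `vI` become isolated). -/
def contractGraph (G : SimpleGraph V) (I : Set V) (vI : V) : SimpleGraph V where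
  Adj a b := a ≠ b ∧
    ((a ∉ I ∧ b ∉ I ∧ G.Adj a b) ∨
     (a = vI ∧ b ∉ I ∧ ∃ x ∈ I, G.Adj x b) ∨
     (b = vI ∧ a ∉ I ∧ ∃ x ∈ I, G.Adj x a))
  symm := by
    constructor
    rintro a b ⟨hne, h⟩
    refine ⟨hne.symm, ?_⟩
    rcases h with ⟨ha, hb, hadj⟩ | ⟨ha, hb, x, hx, hadj⟩ | ⟨hb, ha, x, hx, hadj⟩
    · exact Or.inl ⟨hb, ha, hadj.symm⟩
    · exact Or.inr (Or.inr ⟨ha, hb, x, hx, hadj⟩)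
    · exact Or.inr (Or.inl ⟨hb, ha, x, hx, hadj⟩)
  loopless := by constructor; rintro a ⟨hne, -⟩; exact hne rfl

/-- The orientation of the contracted graph induced by an orientation `O` of `G`. -/
def contractDir {G : SimpleGraph V} (O : AcyclicOrientation G) (I : Set V) (vI : V) :
    V → V → Prop := fun a b =>
  (a ∉ I ∧ b ∉ I ∧ O.dir a b) ∨
  (a = vI ∧ b ∉ I ∧ ∃ x ∈ I, O.dir x b) ∨
  (b = vI ∧ a ∉ I ∧ ∃ x ∈ I, O.dir a x)

/-- The orientation `i → j` iff `i` precedes `j` in the list `l`. -/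
def permDir (G : SimpleGraph V) [DecidableEq V] (l : List V) : V → V → Prop :=
  fun i j => G.Adj i j ∧ l.idxOf i < l.idxOf j

/-!
Clicking a vertex `v ∉ I` of `Γ_I` is clicking `v` in `Γ`, while clicking `V_I` reverses every
edge of the cut `(I, Iᶜ)`, all of which leave `I`. In `Γ` that reversal is obtained by clicking
`v₁, …, v_k` in turn: since no edge enters `I` and `v₁ ⋯ v_k` extends the order on `I`, each `vᵢ`
is a source once `v₁, …, vᵢ₋₁` have been clicked. Both moves keep the orientation inside `I` and
commute with contraction. At the end the orientation agrees with `O²` inside `I` and after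
contraction, hence everywhere: acyclicity of `Γ_I` fixes the direction of each cut edge.
-/

open Relation

def reverseCut (D : V → V → Prop) (S : Set V) (a b : V) : Prop :=
  ((a ∈ S ↔ b ∈ S) ∧ D a b) ∨ (¬(a ∈ S ↔ b ∈ S) ∧ D b a)

section reverseCut

variable {D : V → V → Prop} {S T : Set V} {a b : V}

theorem reverseCut_of_iff (h : a ∈ S ↔ b ∈ S) : reverseCut D S a b ↔ D a b := by
  simp [reverseCut, h]

theorem reverseCut_of_not_iff (h : ¬(a ∈ S ↔ b ∈ S)) : reverseCut D S a b ↔ D b a := by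
  simp [reverseCut, h]

theorem reverseCut_empty : reverseCut D ∅ = D := by
  funext a b
  exact propext (reverseCut_of_iff (by simp))

theorem reverseCut_reverseCut : reverseCut (reverseCut D S) T = reverseCut D (symmDiff S T) := by
  funext a b
  simp only [reverseCut, Set.mem_symmDiff, eq_iff_iff]
  by_cases a ∈ S <;> by_cases b ∈ S <;> by_cases a ∈ T <;> by_cases b ∈ T <;> simp_all

theorem reverseCut_cases (hS : ∀ a b, D a b → b ∈ S → a ∈ S) (h : reverseCut D S a b) :
    ((a ∈ S ↔ b ∈ S) ∧ D a b) ∨ (a ∉ S ∧ b ∈ S) := by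
  rcases h with h | ⟨hab, hba⟩
  · exact Or.inl h
  · by_cases ha : a ∈ S
    · exact absurd ⟨fun _ => hS b a hba ha, fun _ => ha⟩ hab
    · exact Or.inr ⟨ha, by tauto⟩

theorem mem_of_transGen_reverseCut (hS : ∀ a b, D a b → b ∈ S → a ∈ S)
    (h : TransGen (reverseCut D S) a b) (ha : a ∈ S) : b ∈ S := by
  induction h with
  | single hab => rcases reverseCut_cases hS hab with h | h <;> tauto
  | tail _ hcb ih => rcases reverseCut_cases hS hcb with h | h <;> tauto

/-- No edge of `reverseCut D S` leaves `S`, so a path that starts in `S` or ends outside `S`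
never crosses the cut. -/
theorem transGen_of_transGen_reverseCut (hS : ∀ a b, D a b → b ∈ S → a ∈ S)
    (h : TransGen (reverseCut D S) a b) (hab : a ∈ S ∨ b ∉ S) : TransGen D a b := by
  induction h with
  | single hab' =>
    rcases reverseCut_cases hS hab' with h | h
    · exact .single h.2
    · tauto
  | @tail c b hac hcb ih =>
    rcases reverseCut_cases hS hcb with ⟨hcb, hD⟩ | ⟨hc, hb⟩
    · refine .tail (ih ?_) hD
      rcases hab with ha | hb
      · exact .inl ha
      · exact .inr (hcb.not.mpr hb)
    · rcases hab with ha | hb'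
      · exact absurd (mem_of_transGen_reverseCut hS hac ha) hc
      · exact absurd hb hb'

end reverseCut

namespace AcyclicOrientation

variable {G : SimpleGraph V}

theorem ext {O O' : AcyclicOrientation G} (h : O.dir = O'.dir) : O = O' := by
  cases O; cases O'; congr

theorem dir_irrefl (O : AcyclicOrientation G) (a : V) : ¬ O.dir a a :=
  fun h => G.irrefl (O.dir_adj h)

theorem exists_dir_eq_reverseCut (O : AcyclicOrientation G) {S : Set V}
    (hS : ∀ a b, O.dir a b → b ∈ S → a ∈ S) :
    ∃ O' : AcyclicOrientation G, O'.dir = reverseCut O.dir S :=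
  ⟨{ dir := reverseCut O.dir S
     dir_adj := by
       rintro a b (⟨_, h⟩ | ⟨_, h⟩)
       exacts [O.dir_adj h, (O.dir_adj h).symm]
     total := by
       intro a b hab
       by_cases hS : a ∈ S ↔ b ∈ S
       · rcases O.total hab with h | h
         exacts [.inl (.inl ⟨hS, h⟩), .inr (.inl ⟨hS.symm, h⟩)]
       · rcases O.total hab with h | h
         exacts [.inr (.inr ⟨fun h' => hS h'.symm, h⟩), .inl (.inr ⟨hS, h⟩)]
     acyclic := fun a h => O.acyclic a (transGen_of_transGen_reverseCut hS h (em _)) }, rfl⟩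

theorem clickAt_iff {O O' : AcyclicOrientation G} {v : V} :
    O.ClickAt v O' ↔ O.IsSource v ∧ O'.dir = reverseCut O.dir {v} := by
  have key : ∀ a b, (((a = v ∨ b = v) ∧ O.dir b a) ∨ (a ≠ v ∧ b ≠ v ∧ O.dir a b)) ↔
      reverseCut O.dir {v} a b := by
    intro a b
    have := O.dir_irrefl
    simp only [reverseCut, Set.mem_singleton_iff]
    by_cases a = v <;> by_cases b = v <;> simp_all
  simp only [ClickAt, key, funext_iff, eq_iff_iff]

theorem ClickSeq.append {O O' O'' : AcyclicOrientation G} {l₁ l₂ : List V}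
    (h₁ : ClickSeq O l₁ O') (h₂ : ClickSeq O' l₂ O'') : ClickSeq O (l₁ ++ l₂) O'' := by
  induction h₁ with
  | nil => exact h₂
  | cons hc _ ih => exact .cons hc (ih h₂)

theorem clickSeq_of_predecessors_precede [DecidableEq V] {O O' : AcyclicOrientation G}
    {l : List V} (hl : l.Nodup) (hpred : ∀ a b, O.dir a b → b ∈ l → a ∈ l ∧ l.idxOf a < l.idxOf b)
    (hO' : O'.dir = reverseCut O.dir {x | x ∈ l}) : ClickSeq O l O' := by
  induction l generalizing O with
  | nil =>
    simp only [List.not_mem_nil, Set.ofPred_false, reverseCut_empty] at hO'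
    exact ext hO'.symm ▸ .nil O
  | cons q l ih =>
    obtain ⟨hql, hl⟩ := List.nodup_cons.mp hl
    have hq : O.IsSource q := fun a h => by
      simpa using (hpred a q h List.mem_cons_self).2
    obtain ⟨O₁, hO₁⟩ := O.exists_dir_eq_reverseCut (S := {q})
      fun a _ h hb => (hq a (Set.mem_singleton_iff.mp hb ▸ h)).elim
    refine .cons (clickAt_iff.mpr ⟨hq, hO₁⟩) (ih hl (fun a b h hb => ?_) ?_)
    · have hbq : b ≠ q := by rintro rfl; exact hql hb
      rw [hO₁] at h
      rcases h with ⟨hab, h⟩ | ⟨hab, h⟩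
      · obtain ⟨ha, hlt⟩ := hpred a b h (List.mem_cons_of_mem q hb)
        have haq : a ≠ q := by simp_all
        rw [List.idxOf_cons_ne _ haq.symm, List.idxOf_cons_ne _ hbq.symm] at hlt
        exact ⟨(List.mem_cons.mp ha).resolve_left haq, Nat.succ_lt_succ_iff.mp hlt⟩
      · have haq : a = q := by simp_all
        subst haq
        simpa using (hpred b a h List.mem_cons_self).2
    · have hset : {x | x ∈ q :: l} = symmDiff {q} {x | x ∈ l} := by
        rw [Disjoint.symmDiff_eq_sup (Set.disjoint_singleton_left (s := {x | x ∈ l}).mpr hql)]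
        ext
        simp
      rw [hO', hO₁, reverseCut_reverseCut, hset]

end AcyclicOrientation

section contract

variable {G : SimpleGraph V} {I : Set V} {vI : V} {O : AcyclicOrientation G} {a b : V}

theorem contractDir_iff_of_notMem (hvI : vI ∈ I) (ha : a ∉ I) (hb : b ∉ I) :
    contractDir O I vI a b ↔ O.dir a b := by
  have hav : a ≠ vI := fun h => ha (h ▸ hvI)
  have hbv : b ≠ vI := fun h => hb (h ▸ hvI)
  simp [contractDir, ha, hb, hav, hbv]

theorem contractDir_center_left_iff (hvI : vI ∈ I) (hb : b ∉ I) :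
    contractDir O I vI vI b ↔ ∃ x ∈ I, O.dir x b := by
  simp [contractDir, hvI, hb]

theorem contractDir_center_right_iff (hvI : vI ∈ I) (ha : a ∉ I) :
    contractDir O I vI a vI ↔ ∃ x ∈ I, O.dir a x := by
  simp [contractDir, hvI, ha]

theorem contractDir_support (hvI : vI ∈ I) (h : contractDir O I vI a b) :
    (a ∉ I ∨ a = vI) ∧ (b ∉ I ∨ b = vI) ∧ ¬(a = vI ∧ b = vI) := by
  rcases h with ⟨ha, hb, -⟩ | ⟨rfl, hb, -⟩ | ⟨rfl, ha, -⟩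
  · exact ⟨.inl ha, .inl hb, fun h => ha (h.1 ▸ hvI)⟩
  · exact ⟨.inr rfl, .inl hb, fun h => hb (h.2 ▸ hvI)⟩
  · exact ⟨.inl ha, .inr rfl, fun h => ha (h.1 ▸ hvI)⟩

theorem contractDir_reverseCut {O' : AcyclicOrientation G} {S T : Set V} (hvI : vI ∈ I)
    (hO' : O'.dir = reverseCut O.dir S) (hI : ∀ x ∈ I, x ∈ S ↔ vI ∈ T)
    (hIc : ∀ x ∉ I, x ∈ S ↔ x ∈ T) :
    contractDir O' I vI = reverseCut (contractDir O I vI) T := by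
  funext a b
  apply propext
  by_cases hsupp : (a ∉ I ∨ a = vI) ∧ (b ∉ I ∨ b = vI) ∧ ¬(a = vI ∧ b = vI)
  swap
  · refine iff_of_false (fun h => hsupp (contractDir_support hvI h)) ?_
    rintro (⟨-, h⟩ | ⟨-, h⟩) <;> have := contractDir_support hvI h <;> tauto
  obtain ⟨ha | rfl, hb | rfl, hne⟩ := hsupp
  · simp only [reverseCut, contractDir_iff_of_notMem hvI ha hb,
      contractDir_iff_of_notMem hvI hb ha, hO', hIc a ha, hIc b hb]
  · rw [contractDir_center_right_iff hvI ha]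
    by_cases hP : a ∈ T ↔ b ∈ T
    · rw [reverseCut_of_iff hP, contractDir_center_right_iff hvI ha]
      refine exists_congr fun x => and_congr_right fun hx => ?_
      rw [hO', reverseCut_of_iff ((hIc a ha).trans (hP.trans (hI x hx).symm))]
    · rw [reverseCut_of_not_iff hP, contractDir_center_left_iff hvI ha]
      refine exists_congr fun x => and_congr_right fun hx => ?_
      rw [hO', reverseCut_of_not_iff fun h => hP ((hIc a ha).symm.trans (h.trans (hI x hx)))]
  · rw [contractDir_center_left_iff hvI hb]
    by_cases hP : a ∈ T ↔ b ∈ T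
    · rw [reverseCut_of_iff hP, contractDir_center_left_iff hvI hb]
      refine exists_congr fun x => and_congr_right fun hx => ?_
      rw [hO', reverseCut_of_iff ((hI x hx).trans (hP.trans (hIc b hb).symm))]
    · rw [reverseCut_of_not_iff hP, contractDir_center_right_iff hvI hb]
      refine exists_congr fun x => and_congr_right fun hx => ?_
      rw [hO', reverseCut_of_not_iff fun h => hP ((hI x hx).symm.trans (h.trans (hIc b hb)))]
  · exact absurd ⟨rfl, rfl⟩ hne

end contract

section lift

variable {G : SimpleGraph V} {I : Set V} {vI : V} {O : AcyclicOrientation G}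
  {OI : AcyclicOrientation (contractGraph G I vI)}

theorem isSource_of_isSource_contract (hvI : vI ∈ I) (hO : OI.dir = contractDir O I vI) {v : V}
    (hv : v ∉ I) (hsrc : OI.IsSource v) : O.IsSource v := by
  intro a h
  by_cases ha : a ∈ I
  · exact hsrc vI (hO ▸ (contractDir_center_left_iff hvI hv).mpr ⟨a, ha, h⟩)
  · exact hsrc a (hO ▸ (contractDir_iff_of_notMem hvI ha hv).mpr h)

theorem mem_of_dir_of_isSource_contract (hvI : vI ∈ I) (hO : OI.dir = contractDir O I vI)
    (hsrc : OI.IsSource vI) {a b : V} (h : O.dir a b) (hb : b ∈ I) : a ∈ I := by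
  by_contra ha
  exact hsrc a (hO ▸ (contractDir_center_right_iff hvI ha).mpr ⟨b, hb, h⟩)

theorem dir_of_contractDir_eq {O' : AcyclicOrientation G} (hvI : vI ∈ I)
    (hO : OI.dir = contractDir O I vI) (hO' : OI.dir = contractDir O' I vI)
    (hI : ∀ a ∈ I, ∀ b ∈ I, O.dir a b → O'.dir a b) {a b : V} (h : O.dir a b) : O'.dir a b := by
  have hcycle : ∀ x, OI.dir vI x → OI.dir x vI → False :=
    fun x h₁ h₂ => OI.acyclic vI (.tail (.single h₁) h₂)
  by_cases ha : a ∈ I <;> by_cases hb : b ∈ I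
  · exact hI a ha b hb h
  · refine (O'.total (O.dir_adj h)).resolve_right fun h' => hcycle b ?_ ?_
    · exact hO ▸ (contractDir_center_left_iff hvI hb).mpr ⟨a, ha, h⟩
    · exact hO' ▸ (contractDir_center_right_iff hvI hb).mpr ⟨a, ha, h'⟩
  · refine (O'.total (O.dir_adj h)).resolve_right fun h' => hcycle a ?_ ?_
    · exact hO' ▸ (contractDir_center_left_iff hvI ha).mpr ⟨b, hb, h'⟩
    · exact hO ▸ (contractDir_center_right_iff hvI ha).mpr ⟨b, hb, h⟩
  · have h' : contractDir O' I vI a b := by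
      rw [← hO', hO]
      exact (contractDir_iff_of_notMem hvI ha hb).mpr h
    exact (contractDir_iff_of_notMem hvI ha hb).mp h'

theorem eq_of_contractDir_eq {O' : AcyclicOrientation G} (hvI : vI ∈ I)
    (hO : OI.dir = contractDir O I vI) (hO' : OI.dir = contractDir O' I vI)
    (hI : ∀ a ∈ I, ∀ b ∈ I, O.dir a b ↔ O'.dir a b) : O = O' :=
  ext <| funext₂ fun _ _ => propext
    ⟨dir_of_contractDir_eq hvI hO hO' fun a ha b hb => (hI a ha b hb).mp,
     dir_of_contractDir_eq hvI hO' hO fun a ha b hb => (hI a ha b hb).mpr⟩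

theorem exists_clickSeq_of_clickAt_contract [DecidableEq V] {L : List V} (hvI : vI ∈ I)
    (hL : L.Nodup) (hmem : ∀ x, x ∈ L ↔ x ∈ I)
    (hlin : ∀ a ∈ I, ∀ b ∈ I, O.dir a b → L.idxOf a < L.idxOf b)
    (hO : OI.dir = contractDir O I vI) {OI' : AcyclicOrientation (contractGraph G I vI)} {v : V}
    (hclick : OI.ClickAt v OI') (hv : v = vI ∨ v ∉ I) :
    ∃ O' : AcyclicOrientation G, ClickSeq O (if v = vI then L else [v]) O' ∧
      (∀ a ∈ I, ∀ b ∈ I, O'.dir a b ↔ O.dir a b) ∧ OI'.dir = contractDir O' I vI := by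
  obtain ⟨hsrc, hOI'⟩ := clickAt_iff.mp hclick
  rcases hv with rfl | hv
  · obtain ⟨O', hO'⟩ := O.exists_dir_eq_reverseCut fun a b h hb =>
      mem_of_dir_of_isSource_contract hvI hO hsrc h hb
    refine ⟨O', ?_, fun a ha b hb => by rw [hO', reverseCut_of_iff (iff_of_true ha hb)], ?_⟩
    · rw [if_pos rfl]
      refine clickSeq_of_predecessors_precede hL (fun a b h hb => ?_) (Set.ext hmem ▸ hO')
      have ha := mem_of_dir_of_isSource_contract hvI hO hsrc h ((hmem b).mp hb)
      exact ⟨(hmem a).mpr ha, hlin a ha b ((hmem b).mp hb) h⟩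
    · rw [hOI', hO, contractDir_reverseCut hvI hO'
        (fun x hx => iff_of_true hx (Set.mem_singleton _))
        fun x hx => iff_of_false hx fun h => hx (h ▸ hvI)]
  · have hvvI : v ≠ vI := fun h => hv (h ▸ hvI)
    have hsrc' := isSource_of_isSource_contract hvI hO hv hsrc
    obtain ⟨O', hO'⟩ := O.exists_dir_eq_reverseCut (S := {v})
      fun a _ h hb => (hsrc' a (Set.mem_singleton_iff.mp hb ▸ h)).elim
    have hIv : ∀ x ∈ I, x ∉ ({v} : Set V) := fun x hx h => hv (Set.mem_singleton_iff.mp h ▸ hx)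
    refine ⟨O', ?_, fun a ha b hb => ?_, ?_⟩
    · rw [if_neg hvvI]
      exact .cons (clickAt_iff.mpr ⟨hsrc', hO'⟩) (.nil O')
    · rw [hO', reverseCut_of_iff (iff_of_false (hIv a ha) (hIv b hb))]
    · rw [hOI', hO, contractDir_reverseCut hvI hO'
        (fun x hx => iff_of_false (hIv x hx) (hIv vI hvI)) fun _ _ => Iff.rfl]

end lift

theorem expand_contracted_click_sequence_general [DecidableEq V] (G : SimpleGraph V)
    (I : Set V) (vI : V) (hvI : vI ∈ I)
    (L : List V) (hnodup : L.Nodup) (hmem : ∀ x, x ∈ L ↔ x ∈ I)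
    (O₁ O₂ : AcyclicOrientation G)
    (hagree : ∀ a ∈ I, ∀ b ∈ I, (O₁.dir a b ↔ O₂.dir a b))
    (hlin : ∀ a ∈ I, ∀ b ∈ I, O₁.dir a b → L.idxOf a < L.idxOf b)
    (O₁I O₂I : AcyclicOrientation (contractGraph G I vI))
    (e1 : ∀ a b, O₁I.dir a b ↔ contractDir O₁ I vI a b)
    (e2 : ∀ a b, O₂I.dir a b ↔ contractDir O₂ I vI a b)
    (cI : List V) (hcI : ∀ x ∈ cI, x = vI ∨ x ∉ I)
    (h : ClickSeq O₁I cI O₂I) :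
    ClickSeq O₁ (cI.flatMap (fun x => if x = vI then L else [x])) O₂ := by
  replace e1 := funext₂ fun a b => propext (e1 a b)
  replace e2 := funext₂ fun a b => propext (e2 a b)
  induction h generalizing O₁ with
  | nil => exact eq_of_contractDir_eq hvI e1 e2 hagree ▸ .nil O₁
  | cons hclick _ ih =>
    obtain ⟨O', hseq, hI, e'⟩ := exists_clickSeq_of_clickAt_contract hvI hnodup hmem hlin e1
      hclick (hcI _ List.mem_cons_self)
    rw [List.flatMap_cons]
    exact hseq.append <| ih O' (fun a ha b hb => (hI a ha b hb).trans (hagree a ha b hb))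
      (fun a ha b hb h => hlin a ha b hb ((hI a ha b hb).mp h))
      (fun x hx => hcI x (List.mem_cons_of_mem _ hx)) e' e2

/-- Replacing each occurrence of the contracted vertex `V_I` in a click-sequence over `Γ_I` by the
block `v₁ v₂ ⋯ v_k` (a linear extension of `I`) yields a click-sequence over `Γ`. -/
theorem expand_contracted_click_sequence [Fintype V] [DecidableEq V] (G : SimpleGraph V)
    (I : Set V) (vI : V) (hvI : vI ∈ I)
    (L : List V) (hnodup : L.Nodup) (hmem : ∀ x, x ∈ L ↔ x ∈ I)
    (O₁ O₂ : AcyclicOrientation G)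
    (hagree : ∀ a ∈ I, ∀ b ∈ I, (O₁.dir a b ↔ O₂.dir a b))
    (hlin : ∀ a ∈ I, ∀ b ∈ I, O₁.dir a b → L.idxOf a < L.idxOf b)
    (O₁I O₂I : AcyclicOrientation (contractGraph G I vI))
    (e1 : ∀ a b, O₁I.dir a b ↔ contractDir O₁ I vI a b)
    (e2 : ∀ a b, O₂I.dir a b ↔ contractDir O₂ I vI a b)
    (cI : List V) (hcI : ∀ x ∈ cI, x = vI ∨ x ∉ I)
    (h : ClickSeq O₁I cI O₂I) :
    ClickSeq O₁ (cI.flatMap (fun x => if x = vI then L else [x])) O₂ :=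
  expand_contracted_click_sequence_general G I vI hvI L hnodup hmem O₁ O₂ hagree hlin O₁I O₂I e1 e2
    cI hcI h
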